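/- In the OMQ language (ALCI, bELIQ), tree-database relaxing OMQ evaluation is at least as complete as ELI^u_⊥-ontology relaxing OMQ evaluation: for every OMQ Q(x̄) = (O, Σ, q) with O an ALCI ontology and q a bELIQ, every Σ-database D, and every ā ∈ adom(D)^{|x̄|}, if ā is a certain answer to (O≈, Σ, q) on D (with O≈ the set of all ELI^u_⊥ consequences of O), then ā ∈ app_{F∧}(Q, D), i.e., ā is a certain answer to Q on the unraveling D≈_ā. -/

import Mathlib

set_option autoImplicit false

attribute [local instance] Classical.propDecidable

/-! ### Interpretations, databases, homomorphisms -/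

structure Interp (C R A : Type) where
  cn : C → A → Prop
  rn : R → A → A → Prop

namespace Interp

variable {C R A : Type}

/-- The active domain of an interpretation/database. -/
def adom (I : Interp C R A) : Set A :=
  {a | (∃ c, I.cn c a) ∨ (∃ r b, I.rn r a b) ∨ (∃ r b, I.rn r b a)}

/-- An interpretation has finitely many facts (this is what makes it a database). -/
def FiniteFacts (I : Interp C R A) : Prop :=
  {p : C × A | I.cn p.1 p.2}.Finite ∧ {t : R × A × A | I.rn t.1 t.2.1 t.2.2}.Finite

/-- All facts use only symbols from the signature `(SC, SR)`. -/
def InSig (I : Interp C R A) (SC : Set C) (SR : Set R) : Prop :=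
  (∀ c a, I.cn c a → c ∈ SC) ∧ (∀ r a b, I.rn r a b → r ∈ SR)

/-- Restriction of an interpretation to a set of elements. -/
def restrict (I : Interp C R A) (s : Set A) : Interp C R A where
  cn c a := a ∈ s ∧ I.cn c a
  rn r a b := a ∈ s ∧ b ∈ s ∧ I.rn r a b

/-- Semantics of (possibly inverse) roles: `Sum.inl r` is `r`, `Sum.inr r` is `r⁻`. -/
def roleE (I : Interp C R A) : R ⊕ R → A → A → Prop
  | .inl r, a, b => I.rn r a b
  | .inr r, a, b => I.rn r b a

/-- The undirected graph underlying an interpretation. -/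
def graphOf (I : Interp C R A) : SimpleGraph A where
  Adj a b := a ≠ b ∧ ∃ r, I.rn r a b ∨ I.rn r b a
  symm := ⟨by rintro a b ⟨hne, r, hr⟩; exact ⟨hne.symm, r, hr.symm⟩⟩
  loopless := ⟨by rintro a ⟨hne, -⟩; exact hne rfl⟩

/-- A database/interpretation is a tree: the underlying graph is acyclic,
there are no self loops and no multi-edges (trees need not be connected). -/
def IsTree (I : Interp C R A) : Prop :=
  I.graphOf.IsAcyclic ∧ (∀ r a, ¬ I.rn r a a) ∧
    (∀ (ρ₁ ρ₂ : R ⊕ R) (a b : A), ρ₁ ≠ ρ₂ → I.roleE ρ₁ a b → ¬ I.roleE ρ₂ a b)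

end Interp

/-- Homomorphisms between interpretations. -/
structure Hom {C R A B : Type} (I : Interp C R A) (J : Interp C R B) where
  toFun : A → B
  map_cn : ∀ c a, I.cn c a → J.cn c (toFun a)
  map_rn : ∀ r a b, I.rn r a b → J.rn r (toFun a) (toFun b)

/-! ### Tree decompositions and treewidth -/

/-- An `(ℓ,k)`-tree decomposition of an interpretation: an undirected tree `(V,G)`
with bags of size at most `k`, pairwise overlaps of size at most `ℓ`, every active
element appearing in a nonempty connected set of bags, and every role edge
contained in some bag. -/
structure TreeDecomp {C R A : Type} (I : Interp C R A) (ℓ k : ℕ) where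
  V : Type
  G : SimpleGraph V
  conn : G.Connected
  acyc : G.IsAcyclic
  bag : V → Set A
  cover : ∀ a ∈ I.adom, (G.induce {v | a ∈ bag v}).Connected
  edges : ∀ r a b, I.rn r a b → ∃ v, a ∈ bag v ∧ b ∈ bag v
  bagFin : ∀ v, (bag v).Finite
  bagCard : ∀ v, (bag v).ncard ≤ k
  overlap : ∀ v w, v ≠ w → (bag v ∩ bag w).ncard ≤ ℓ

/-- `I` has treewidth `(ℓ,k)`. -/
def HasTW {C R A : Type} (I : Interp C R A) (ℓ k : ℕ) : Prop :=
  Nonempty (TreeDecomp I ℓ k)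

/-! ### Conjunctive queries and UCQs -/

/-- A conjunctive query with `m` answer variables (`Fin m`) and quantified
variables `V`. -/
structure CQ (C R : Type) (m : ℕ) where
  V : Type
  cnAtoms : Set (C × (Fin m ⊕ V))
  rnAtoms : Set (R × (Fin m ⊕ V) × (Fin m ⊕ V))

namespace CQ

variable {C R A : Type} {m : ℕ}

/-- `I ⊨ q(atup)`. -/
def Eval (q : CQ C R m) (I : Interp C R A) (atup : Fin m → A) : Prop :=
  ∃ h : Fin m ⊕ q.V → A, (∀ i, h (.inl i) = atup i) ∧
    (∀ p ∈ q.cnAtoms, I.cn p.1 (h p.2)) ∧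
    (∀ t ∈ q.rnAtoms, I.rn t.1 (h t.2.1) (h t.2.2))

/-- The canonical database of a CQ (all variables as constants). -/
def canon (q : CQ C R m) : Interp C R (Fin m ⊕ q.V) where
  cn c x := (c, x) ∈ q.cnAtoms
  rn r x y := (r, x, y) ∈ q.rnAtoms

/-- The treewidth of a CQ: the treewidth of its canonical database restricted to
the quantified variables (answer variables do not contribute). -/
def HasTWq (q : CQ C R m) (ℓ k : ℕ) : Prop :=
  HasTW (q.canon.restrict (Set.range Sum.inr)) ℓ k

end CQ

/-- A union of conjunctive queries, as an indexed family of CQs of the same arity. -/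
structure UCQ (C R : Type) (m : ℕ) where
  ι : Type
  d : ι → CQ C R m

def UCQ.Eval {C R A : Type} {m : ℕ} (q : UCQ C R m) (I : Interp C R A)
    (atup : Fin m → A) : Prop :=
  ∃ i, (q.d i).Eval I atup

/-! ### Certain answers (generic in the ontology semantics) -/

/-- `atup` is a certain answer on `D` for query semantics `Ev`, w.r.t. all
(nonempty) models satisfying `Mod`: under the standard-names-free reading,
models of `D` are interpretations together with a homomorphism from `D`. -/
def Certain {C R A : Type} {m : ℕ} (Mod : ∀ Δ : Type, Interp C R Δ → Prop)
    (D : Interp C R A) (Ev : ∀ Δ : Type, Interp C R Δ → (Fin m → Δ) → Prop)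
    (atup : Fin m → A) : Prop :=
  ∀ (Δ : Type), Nonempty Δ → ∀ I : Interp C R Δ, Mod Δ I →
    ∀ h : Hom D I, Ev Δ I (fun i => h.toFun (atup i))

/-- `D` is satisfiable w.r.t. the class of models described by `Mod`. -/
def Satisfiable {C R A : Type} (Mod : ∀ Δ : Type, Interp C R Δ → Prop)
    (D : Interp C R A) : Prop :=
  ∃ (Δ : Type) (_ : Nonempty Δ) (I : Interp C R Δ), Nonempty (Hom D I) ∧ Mod Δ I

/-! ### First-order logic (no equality, no constants) -/

inductive FO (C R : Type) : ℕ → Type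
  | cn {n : ℕ} (c : C) (i : Fin n) : FO C R n
  | rn {n : ℕ} (r : R) (i j : Fin n) : FO C R n
  | fls {n : ℕ} : FO C R n
  | imp {n : ℕ} (φ ψ : FO C R n) : FO C R n
  | all {n : ℕ} (φ : FO C R (n+1)) : FO C R n

def FO.Eval {C R A : Type} (I : Interp C R A) : {n : ℕ} → FO C R n → (Fin n → A) → Prop
  | _, .cn c i, v => I.cn c (v i)
  | _, .rn r i j, v => I.rn r (v i) (v j)
  | _, .fls, _ => False
  | _, .imp φ ψ, v => φ.Eval I v → ψ.Eval I v
  | _, .all φ, v => ∀ a, φ.Eval I (Fin.cons a v)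

/-- `I` is a model of the FO ontology `O`. -/
def ModelsFO {C R A : Type} (I : Interp C R A) (O : Set (FO C R 0)) : Prop :=
  ∀ φ ∈ O, φ.Eval I (fun i => i.elim0)

/-- `O ⊨ O'` for FO ontologies. -/
def FOEntails {C R : Type} (O O' : Set (FO C R 0)) : Prop :=
  ∀ (Δ : Type), Nonempty Δ → ∀ I : Interp C R Δ, ModelsFO I O → ModelsFO I O'

/-! ### Tuple-generating dependencies -/

/-- A TGD with `n` frontier variables, whose body and head are CQs with the
frontier variables as answer variables; `head = none` stands for `⊥`. -/
structure TGD (C R : Type) where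
  n : ℕ
  body : CQ C R n
  head : Option (CQ C R n)

def TGD.Sat {C R A : Type} (t : TGD C R) (I : Interp C R A) : Prop :=
  ∀ v : Fin t.n → A, t.body.Eval I v →
    match t.head with
    | some ψ => ψ.Eval I v
    | none => False

def ModelsTGDSet {C R A : Type} (I : Interp C R A) (O : Set (TGD C R)) : Prop :=
  ∀ t ∈ O, t.Sat I

/-! ### Description logic concepts -/

/-- `ELIU` concepts with ⊥, possibly disjunction and the universal role. -/
inductive ELIU (C R : Type) : Type
  | top
  | bot
  | cn (c : C)
  | inter (X Y : ELIU C R)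
  | union (X Y : ELIU C R)
  | exR (ρ : R ⊕ R) (X : ELIU C R)
  | exU (X : ELIU C R)

namespace ELIU

variable {C R A : Type}

def sem (I : Interp C R A) : ELIU C R → A → Prop
  | .top, _ => True
  | .bot, _ => False
  | .cn c, a => I.cn c a
  | .inter X Y, a => X.sem I a ∧ Y.sem I a
  | .union X Y, a => X.sem I a ∨ Y.sem I a
  | .exR ρ X, a => ∃ b, I.roleE ρ a b ∧ X.sem I b
  | .exU X, _ => ∃ b, X.sem I b

def uFree : ELIU C R → Prop
  | .top => True
  | .bot => True
  | .cn _ => True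
  | .inter X Y => X.uFree ∧ Y.uFree
  | .union X Y => X.uFree ∧ Y.uFree
  | .exR _ X => X.uFree
  | .exU _ => False

def disjFree : ELIU C R → Prop
  | .top => True
  | .bot => True
  | .cn _ => True
  | .inter X Y => X.disjFree ∧ Y.disjFree
  | .union _ _ => False
  | .exR _ X => X.disjFree
  | .exU X => X.disjFree

def botFree : ELIU C R → Prop
  | .top => True
  | .bot => False
  | .cn _ => True
  | .inter X Y => X.botFree ∧ Y.botFree
  | .union X Y => X.botFree ∧ Y.botFree
  | .exR _ X => X.botFree
  | .exU X => X.botFree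

end ELIU

/-- A concept inclusion is an `ELI_⊥` CI (no disjunction, no universal role). -/
def ELIbotCI {C R : Type} (p : ELIU C R × ELIU C R) : Prop :=
  p.1.disjFree ∧ p.1.uFree ∧ p.2.disjFree ∧ p.2.uFree

/-- A concept inclusion is an `ELI` CI. -/
def ELICI {C R : Type} (p : ELIU C R × ELIU C R) : Prop :=
  ELIbotCI p ∧ p.1.botFree ∧ p.2.botFree

def ModelsELIUOnt {C R A : Type} (I : Interp C R A)
    (T : Set (ELIU C R × ELIU C R)) : Prop :=
  ∀ p ∈ T, ∀ a, p.1.sem I a → p.2.sem I a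

def EntailsELIU {C R : Type} (T T' : Set (ELIU C R × ELIU C R)) : Prop :=
  ∀ (Δ : Type), Nonempty Δ → ∀ I : Interp C R Δ, ModelsELIUOnt I T → ModelsELIUOnt I T'

/-- `ALCI` concepts. -/
inductive ALCI (C R : Type) : Type
  | top
  | cn (c : C)
  | neg (X : ALCI C R)
  | inter (X Y : ALCI C R)
  | exR (ρ : R ⊕ R) (X : ALCI C R)

namespace ALCI

variable {C R A : Type}

def sem (I : Interp C R A) : ALCI C R → A → Prop
  | .top, _ => True
  | .cn c, a => I.cn c a
  | .neg X, a => ¬ X.sem I a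
  | .inter X Y, a => X.sem I a ∧ Y.sem I a
  | .exR ρ X, a => ∃ b, I.roleE ρ a b ∧ X.sem I b

/-- `C ⊔ D` as an abbreviation. -/
def unionA (X Y : ALCI C R) : ALCI C R := .neg (.inter (.neg X) (.neg Y))

/-- `∀r.C` as an abbreviation. -/
def allR (r : R) (X : ALCI C R) : ALCI C R := .neg (.exR (.inl r) (.neg X))

/-- `∃rⁿ.C` (n-fold nesting). -/
def exPow (r : R) : ℕ → ALCI C R → ALCI C R
  | 0, X => X
  | n+1, X => .exR (.inl r) (exPow r n X)

end ALCI

def ModelsALCIOnt {C R A : Type} (I : Interp C R A)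
    (O : Set (ALCI C R × ALCI C R)) : Prop :=
  ∀ p ∈ O, ∀ a, p.1.sem I a → p.2.sem I a

def EntailsALCI {C R : Type} (O O' : Set (ALCI C R × ALCI C R)) : Prop :=
  ∀ (Δ : Type), Nonempty Δ → ∀ I : Interp C R Δ, ModelsALCIOnt I O → ModelsALCIOnt I O'

/-- The set `O≈` of all `ELI^u_⊥` concept inclusions entailed by the ALCI
ontology `O`. -/
def ELIuApprox {C R : Type} (O : Set (ALCI C R × ALCI C R)) :
    Set (ELIU C R × ELIU C R) :=
  {p | p.1.disjFree ∧ p.2.disjFree ∧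
    ∀ (Δ : Type), Nonempty Δ → ∀ I : Interp C R Δ, ModelsALCIOnt I O →
      ∀ a, p.1.sem I a → p.2.sem I a}

/-! ### bELIQs -/

/-- A bELIQ: either an ELIQ `C(x)` (unary) or a Boolean ELIQ `∃u.C`. -/
inductive BELIQ (C R : Type) : Type
  | q1 (X : ELIU C R)
  | q0 (X : ELIU C R)

namespace BELIQ

variable {C R A : Type}

def arity : BELIQ C R → ℕ
  | .q1 _ => 1
  | .q0 _ => 0

/-- Well-formedness: the underlying concept is an `ELI` concept. -/
def wf : BELIQ C R → Prop
  | .q1 X => X.disjFree ∧ X.uFree ∧ X.botFree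
  | .q0 X => X.disjFree ∧ X.uFree ∧ X.botFree

def Eval : (q : BELIQ C R) → Interp C R A → (Fin q.arity → A) → Prop
  | .q1 X, I, v => X.sem I (v ⟨0, Nat.zero_lt_one⟩)
  | .q0 X, I, _ => ∃ a, X.sem I a

end BELIQ

/-! ### Tree unraveling -/

/-- Paths in a database, indexed by their tail. -/
inductive UPath {C R A : Type} (I : Interp C R A) : A → Type
  | nil (a : A) : UPath I a
  | cons {a : A} (p : UPath I a) (ρ : R ⊕ R) (b : A) (h : I.roleE ρ a b) : UPath I b

/-- The tree unraveling `D≈_S` of `D` at `S`: it contains all facts of `D|_S`,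
the facts along paths, and the connecting facts between `S` and paths. -/
def treeUnravel {C R A : Type} (D : Interp C R A) (S : Set A) :
    Interp C R (A ⊕ (Σ a : A, UPath D a)) where
  cn c x :=
    match x with
    | .inl a => a ∈ S ∧ D.cn c a
    | .inr p => D.cn c p.1
  rn r x y :=
    (∃ a b, a ∈ S ∧ b ∈ S ∧ D.rn r a b ∧ x = .inl a ∧ y = .inl b) ∨
    (∃ (a : A) (p : UPath D a) (b : A) (h : D.roleE (.inl r) a b),
        x = .inr ⟨a, p⟩ ∧ y = .inr ⟨b, p.cons (.inl r) b h⟩) ∨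
    (∃ (a : A) (p : UPath D a) (b : A) (h : D.roleE (.inr r) a b),
        y = .inr ⟨a, p⟩ ∧ x = .inr ⟨b, p.cons (.inr r) b h⟩) ∨
    (∃ (a b : A) (p : UPath D b), a ∈ S ∧ D.rn r a b ∧ x = .inl a ∧ y = .inr ⟨b, p⟩) ∨
    (∃ (a b : A) (p : UPath D b), a ∈ S ∧ D.rn r b a ∧ x = .inr ⟨b, p⟩ ∧ y = .inl a)

/-! ### (ℓ,k)-unraveling -/

/-- Admissibility of a bag `T` in an `(ℓ,k)`-sequence: `S ⊆ T ⊆ adom(D)` and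
`|T \ S| ≤ k`. -/
def SeqOk {C R A : Type} (D : Interp C R A) (S : Set A) (k : ℕ) (T : Set A) : Prop :=
  S ⊆ T ∧ T ⊆ D.adom ∧ (T \ S).Finite ∧ (T \ S).ncard ≤ k

/-- `(ℓ,k)`-sequences `S₀,O₀,S₁,…,Sₙ`, indexed by the last bag `Sₙ`. -/
inductive LKSeq {C R A : Type} (D : Interp C R A) (S : Set A) (ℓ k : ℕ) : Set A → Type
  | first (S₀ : Set A) (h : SeqOk D S k S₀) : LKSeq D S ℓ k S₀
  | step {T : Set A} (v : LKSeq D S ℓ k T) (O T' : Set A)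
      (hO : S ⊆ O) (hOT : O ⊆ T ∩ T') (hOf : (O \ S).Finite)
      (hOl : (O \ S).ncard ≤ ℓ) (hT' : SeqOk D S k T') : LKSeq D S ℓ k T'

/-- Elements of the `(ℓ,k)`-unraveling: elements of `S` keep their names
(`Sum.inl`), all other copies are identified by the sequence at which they are
introduced. -/
abbrev LKElem {C R A : Type} (D : Interp C R A) (S : Set A) (ℓ k : ℕ) : Type :=
  A ⊕ (Σ T : Set A, LKSeq D S ℓ k T × A)

/-- The copy `a_v` of `a` in the bag of the sequence `v`. -/
noncomputable def LKSeq.rep {C R A : Type} {D : Interp C R A} {S : Set A} {ℓ k : ℕ} :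
    {T : Set A} → LKSeq D S ℓ k T → A → LKElem D S ℓ k
  | _, .first S₀ h, a =>
      if a ∈ S then Sum.inl a else Sum.inr ⟨S₀, (LKSeq.first S₀ h, a)⟩
  | _, .step v O T' h1 h2 h3 h4 h5, a =>
      if a ∈ S then Sum.inl a
      else if a ∈ O then v.rep a
      else Sum.inr ⟨T', (LKSeq.step v O T' h1 h2 h3 h4 h5, a)⟩

/-- The `(ℓ,k)`-unraveling `D≈_{S,ℓ,k}` of `D` up to `S`. -/
noncomputable def unravelLK {C R A : Type} (D : Interp C R A) (S : Set A) (ℓ k : ℕ) :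
    Interp C R (LKElem D S ℓ k) where
  cn c x := ∃ (T : Set A) (v : LKSeq D S ℓ k T) (a : A),
      a ∈ T ∧ x = v.rep a ∧ D.cn c a
  rn r x y := ∃ (T : Set A) (v : LKSeq D S ℓ k T) (a b : A),
      a ∈ T ∧ b ∈ T ∧ x = v.rep a ∧ y = v.rep b ∧ D.rn r a b

/-- The uncopying map. -/
def uncopyLK {C R A : Type} {D : Interp C R A} {S : Set A} {ℓ k : ℕ} :
    LKElem D S ℓ k → A
  | .inl a => a
  | .inr x => x.2.2

/-- `x` is a copy of `a` in the `(ℓ,k)`-unraveling. -/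
def IsCopyLK {C R A : Type} {D : Interp C R A} {S : Set A} {ℓ k : ℕ}
    (x : LKElem D S ℓ k) (a : A) : Prop :=
  ∃ (T : Set A) (v : LKSeq D S ℓ k T), a ∈ T ∧ x = v.rep a

/-- The frontier-one `ℓ,k,ℓ',k'`-TGDs entailed by the ALCI ontology `O`. -/
def approxTGDs {C R : Type} (O : Set (ALCI C R × ALCI C R)) (ℓ k ℓ' k' : ℕ) :
    Set (TGD C R) :=
  {t | t.n ≤ 1 ∧ HasTW t.body.canon ℓ k ∧
       (∀ ψ, t.head = some ψ → HasTW ψ.canon ℓ' k') ∧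
       ∀ (Δ : Type), Nonempty Δ → ∀ I : Interp C R Δ, ModelsALCIOnt I O → t.Sat I}

/-! ### The disjunct operation f and the approximation set E_O -/

def fDisj {C R : Type} : ELIU C R → Set (ELIU C R)
  | .top => {ELIU.top}
  | .bot => {ELIU.bot}
  | .cn c => {ELIU.cn c}
  | .inter X Y => {Z | ∃ X' ∈ fDisj X, ∃ Y' ∈ fDisj Y, Z = ELIU.inter X' Y'}
  | .union X Y => fDisj X ∪ fDisj Y
  | .exR ρ X => {Z | ∃ X' ∈ fDisj X, Z = ELIU.exR ρ X'}
  | .exU X => {Z | ∃ X' ∈ fDisj X, Z = ELIU.exU X'}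

/-- The rewriting of `O` replacing each `C ⊑ D` by `{C' ⊑ D : C' ∈ f(C)}`. -/
def rewriteO {C R : Type} (O : Set (ELIU C R × ELIU C R)) :
    Set (ELIU C R × ELIU C R) :=
  {p | ∃ q ∈ O, p.2 = q.2 ∧ p.1 ∈ fDisj q.1}

/-- `E_O`: all ontologies obtained by choosing, for each inclusion `C' ⊑ D` of
the rewriting, one inclusion `C' ⊑ D'` with `D' ∈ f(D)`. -/
def EO {C R : Type} (O : Set (ELIU C R × ELIU C R)) :
    Set (Set (ELIU C R × ELIU C R)) :=
  {Oh | ∃ g : ELIU C R × ELIU C R → ELIU C R,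
      (∀ p ∈ rewriteO O, g p ∈ fDisj p.2) ∧
      Oh = {q | ∃ p ∈ rewriteO O, q = (p.1, g p)}}

/-! ### Direct products -/

def prodInterp {C R : Type} {n : ℕ} {A : Fin n → Type}
    (I : ∀ i, Interp C R (A i)) : Interp C R (∀ i, A i) where
  cn c f := ∀ i, (I i).cn c (f i)
  rn r f g := ∀ i, (I i).rn r (f i) (g i)

/-! ### Concrete databases and queries for specific statements -/

/-- The grid CQ `q_m` of Statement 16, as its canonical database. -/
def gridDB {C R : Type} (m : ℕ) (r : R) (Aname : Fin m × Fin m → C) :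
    Interp C R (Fin m × Fin m) where
  cn c p := c = Aname p
  rn ρ p q := ρ = r ∧ Even (p.1.1 + p.2.1) ∧
    ((p.1.1 : ℤ) - (q.1.1 : ℤ)).natAbs + ((p.2.1 : ℤ) - (q.2.1 : ℤ)).natAbs = 1

/-- The 3-cycle database of Statement 19. -/
def cycleDB {C R : Type} (nA : Fin 3 → C) (r : R) : Interp C R (Fin 3) where
  cn c i := c = nA i
  rn ρ i j := ρ = r ∧ j = i + 1

/-- The ontology `{Aᵢ ⊓ Aⱼ ⊑ B : 1 ≤ i < j ≤ 3}` of Statement 19. -/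
def cycleOnt {C R : Type} (nA : Fin 3 → C) (nB : C) : Set (ELIU C R × ELIU C R) :=
  {p | ∃ i j : Fin 3, i < j ∧
    p = (ELIU.inter (ELIU.cn (nA i)) (ELIU.cn (nA j)), ELIU.cn nB)}

/-- The Boolean CQ `∃x B(x)` of Statement 19. -/
def existsB {C R : Type} (nB : C) : CQ C R 0 where
  V := Unit
  cnAtoms := {(nB, Sum.inr ())}
  rnAtoms := ∅

/-- The ontology `O = {∃r.⊤ ⊓ ∀r.A ⊑ B₁ ⊔ B₂}` of Statement 14. -/
def O14 {C R : Type} (a b1 b2 : C) (r : R) : Set (ALCI C R × ALCI C R) :=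
  {(ALCI.inter (ALCI.exR (.inl r) ALCI.top) (ALCI.allR r (ALCI.cn a)),
    ALCI.unionA (ALCI.cn b1) (ALCI.cn b2))}

/-- The ontology `O_n` of Statement 14. -/
def O14n {C R : Type} (a b1 x : C) (r : R) (n : ℕ) : Set (ALCI C R × ALCI C R) :=
  {(ALCI.exR (.inl r) (ALCI.cn a), ALCI.exPow r n (ALCI.cn x)),
   (ALCI.exR (.inl r) (ALCI.inter (ALCI.cn a) (ALCI.exPow r (n-1) (ALCI.cn x))),
    ALCI.cn b1)}

/-!
An ALCI model `I` of `O` is turned into a model of `O≈` on the nonempty subsets of its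
domain, in which a disjunction-free ELIU concept holds at a set exactly when it holds at
every member. Given a homomorphism `g` from `D≈_S` into `I`, sending each element of `D`
to the set of `g`-images of its copies in `D≈_S` is a homomorphism from `D`: along every
edge of `D`, each copy of one endpoint has an adjacent copy of the other. A certain answer
of `(O≈, q)` on `D` thus holds at these sets, hence at the member `g (inl tᵢ)`.
-/

lemma Hom.map_roleE {C R A B : Type} {I : Interp C R A} {J : Interp C R B} (g : Hom I J)
    {ρ : R ⊕ R} {a b : A} (h : I.roleE ρ a b) : J.roleE ρ (g.toFun a) (g.toFun b) := by
  cases ρ with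
  | inl r => exact g.map_rn r a b h
  | inr r => exact g.map_rn r b a h

namespace Interp

variable {C R Δ : Type}

/-- The role condition is two-sided so that inverse roles satisfy it as well. -/
def nonemptyPowerset (I : Interp C R Δ) : Interp C R {Y : Set Δ // Y.Nonempty} where
  cn c Y := ∀ y ∈ Y.1, I.cn c y
  rn r Y Y' :=
    (∀ y ∈ Y.1, ∃ y' ∈ Y'.1, I.rn r y y') ∧ (∀ y' ∈ Y'.1, ∃ y ∈ Y.1, I.rn r y y')

lemma nonemptyPowerset_roleE_iff (I : Interp C R Δ) (ρ : R ⊕ R)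
    (Y Y' : {Y : Set Δ // Y.Nonempty}) :
    I.nonemptyPowerset.roleE ρ Y Y' ↔
      (∀ y ∈ Y.1, ∃ y' ∈ Y'.1, I.roleE ρ y y') ∧
        (∀ y' ∈ Y'.1, ∃ y ∈ Y.1, I.roleE ρ y y') := by
  cases ρ
  · rfl
  · exact and_comm

end Interp

namespace ELIU

variable {C R Δ : Type} {I : Interp C R Δ}

lemma sem_of_sem_nonemptyPowerset :
    ∀ (P : ELIU C R) {Y : {Y : Set Δ // Y.Nonempty}}, P.sem I.nonemptyPowerset Y →
      ∀ y ∈ Y.1, P.sem I y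
  | .top, _, _, _, _ => trivial
  | .bot, _, hY, _, _ => hY.elim
  | .cn _, _, hY, y, hy => hY y hy
  | .inter X X', _, hY, y, hy =>
      ⟨sem_of_sem_nonemptyPowerset X hY.1 y hy, sem_of_sem_nonemptyPowerset X' hY.2 y hy⟩
  | .union X X', _, hY, y, hy =>
      hY.imp (fun h => sem_of_sem_nonemptyPowerset X h y hy)
        (fun h => sem_of_sem_nonemptyPowerset X' h y hy)
  | .exR ρ X, _, ⟨Y', hYY', hY'⟩, y, hy => by
      obtain ⟨y', hy', hyy'⟩ := ((I.nonemptyPowerset_roleE_iff ρ _ Y').1 hYY').1 y hy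
      exact ⟨y', hyy', sem_of_sem_nonemptyPowerset X hY' y' hy'⟩
  | .exU X, _, ⟨Y', hY'⟩, _, _ =>
      ⟨Y'.2.some, sem_of_sem_nonemptyPowerset X hY' _ Y'.2.some_mem⟩

lemma sem_nonemptyPowerset_iff :
    ∀ (P : ELIU C R), P.disjFree → ∀ (Y : {Y : Set Δ // Y.Nonempty}),
      P.sem I.nonemptyPowerset Y ↔ ∀ y ∈ Y.1, P.sem I y
  | .top, _, _ => ⟨fun _ _ _ => trivial, fun _ => trivial⟩
  | .bot, _, Y => ⟨False.elim, fun h => h _ Y.2.some_mem⟩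
  | .cn _, _, _ => Iff.rfl
  | .inter X X', hP, Y => by
      simp only [sem, sem_nonemptyPowerset_iff X hP.1, sem_nonemptyPowerset_iff X' hP.2]
      exact forall₂_and.symm
  | .union _ _, hP, _ => hP.elim
  | .exR ρ X, hP, Y => by
      refine ⟨fun h => sem_of_sem_nonemptyPowerset _ h, fun h => ?_⟩
      obtain ⟨y₀, hy₀⟩ := Y.2
      obtain ⟨y₁, hy₀₁, hy₁⟩ := h y₀ hy₀
      let Y' : {Y : Set Δ // Y.Nonempty} :=
        ⟨{y' | X.sem I y' ∧ ∃ y ∈ Y.1, I.roleE ρ y y'}, y₁, hy₁, y₀, hy₀, hy₀₁⟩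
      refine ⟨Y', (I.nonemptyPowerset_roleE_iff ρ Y Y').2 ⟨fun y hy => ?_, fun y' hy' => ?_⟩,
        (sem_nonemptyPowerset_iff X hP Y').2 fun _ hy' => hy'.1⟩
      · obtain ⟨y', hyy', hy'⟩ := h y hy
        exact ⟨y', ⟨hy', y, hy, hyy'⟩, hyy'⟩
      · exact hy'.2
  | .exU X, hP, Y => by
      refine ⟨fun h => sem_of_sem_nonemptyPowerset _ h, fun h => ?_⟩
      obtain ⟨y₀, hy₀⟩ := Y.2
      obtain ⟨y₁, hy₁⟩ := h y₀ hy₀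
      exact ⟨⟨{y | X.sem I y}, y₁, hy₁⟩,
        (sem_nonemptyPowerset_iff X hP _).2 fun _ hy => hy⟩

end ELIU

lemma ModelsELIUOnt.nonemptyPowerset {C R Δ : Type} {I : Interp C R Δ}
    {T : Set (ELIU C R × ELIU C R)} (hT : ∀ p ∈ T, p.2.disjFree) (hI : ModelsELIUOnt I T) :
    ModelsELIUOnt I.nonemptyPowerset T := fun p hp Y hY =>
  (ELIU.sem_nonemptyPowerset_iff p.2 (hT p hp) Y).2 fun y hy =>
    hI p hp y (ELIU.sem_of_sem_nonemptyPowerset p.1 hY y hy)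

lemma ModelsALCIOnt.modelsELIUOnt_ELIuApprox {C R Δ : Type} [Nonempty Δ] {I : Interp C R Δ}
    {O : Set (ALCI C R × ALCI C R)} (hI : ModelsALCIOnt I O) :
    ModelsELIUOnt I (ELIuApprox O) := fun _ hp => hp.2.2 Δ inferInstance I hI

lemma BELIQ.eval_of_eval_nonemptyPowerset {C R Δ : Type} {I : Interp C R Δ} :
    ∀ (q : BELIQ C R) {Y : Fin q.arity → {Y : Set Δ // Y.Nonempty}} {y : Fin q.arity → Δ},
      q.Eval I.nonemptyPowerset Y → (∀ i, y i ∈ (Y i).1) → q.Eval I y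
  | .q1 X, _, _, hq, hy => X.sem_of_sem_nonemptyPowerset hq _ (hy _)
  | .q0 X, _, _, ⟨Y, hY⟩, _ => ⟨Y.2.some, X.sem_of_sem_nonemptyPowerset hY _ Y.2.some_mem⟩

section TreeUnravel

variable {C R A : Type} (D : Interp C R A) (S : Set A)

def unravelCopies (a : A) : Set (A ⊕ (Σ a : A, UPath D a)) :=
  {z | (a ∈ S ∧ z = .inl a) ∨ ∃ p : UPath D a, z = .inr ⟨a, p⟩}

variable {D S}

lemma unravelCopies_nonempty (a : A) : (unravelCopies D S a).Nonempty :=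
  ⟨.inr ⟨a, .nil a⟩, .inr ⟨_, rfl⟩⟩

lemma treeUnravel_cn_of_mem_unravelCopies {c : C} {a : A} (hc : D.cn c a)
    {z : A ⊕ (Σ a : A, UPath D a)} (hz : z ∈ unravelCopies D S a) :
    (treeUnravel D S).cn c z := by
  rcases hz with ⟨hS, rfl⟩ | ⟨p, rfl⟩
  · exact ⟨hS, hc⟩
  · exact hc

lemma exists_treeUnravel_roleE_of_mem_unravelCopies {ρ : R ⊕ R} {a b : A}
    (hab : D.roleE ρ a b) {z : A ⊕ (Σ a : A, UPath D a)} (hz : z ∈ unravelCopies D S a) :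
    ∃ z' ∈ unravelCopies D S b, (treeUnravel D S).roleE ρ z z' := by
  cases ρ with
  | inl r =>
    rcases hz with ⟨hS, rfl⟩ | ⟨p, rfl⟩
    · exact ⟨.inr ⟨b, .nil b⟩, .inr ⟨_, rfl⟩,
        .inr (.inr (.inr (.inl ⟨a, b, .nil b, hS, hab, rfl, rfl⟩)))⟩
    · exact ⟨.inr ⟨b, p.cons (.inl r) b hab⟩, .inr ⟨_, rfl⟩,
        .inr (.inl ⟨a, p, b, hab, rfl, rfl⟩)⟩
  | inr r =>
    rcases hz with ⟨hS, rfl⟩ | ⟨p, rfl⟩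
    · exact ⟨.inr ⟨b, .nil b⟩, .inr ⟨_, rfl⟩,
        .inr (.inr (.inr (.inr ⟨a, b, .nil b, hS, hab, rfl, rfl⟩)))⟩
    · exact ⟨.inr ⟨b, p.cons (.inr r) b hab⟩, .inr ⟨_, rfl⟩,
        .inr (.inr (.inl ⟨a, p, b, hab, rfl, rfl⟩))⟩

def Hom.imageUnravelCopies {Δ : Type} {I : Interp C R Δ} (g : Hom (treeUnravel D S) I) :
    Hom D I.nonemptyPowerset where
  toFun a := ⟨g.toFun '' unravelCopies D S a, (unravelCopies_nonempty a).image _⟩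
  map_cn c a hc := by
    rintro _ ⟨z, hz, rfl⟩
    exact g.map_cn c z (treeUnravel_cn_of_mem_unravelCopies hc hz)
  map_rn r a b hab := by
    refine ⟨?_, ?_⟩
    · rintro _ ⟨z, hz, rfl⟩
      obtain ⟨z', hz', hzz'⟩ :=
        exists_treeUnravel_roleE_of_mem_unravelCopies (ρ := .inl r) hab hz
      exact ⟨_, ⟨z', hz', rfl⟩, g.map_roleE hzz'⟩
    · rintro _ ⟨z', hz', rfl⟩
      obtain ⟨z, hz, hz'z⟩ :=
        exists_treeUnravel_roleE_of_mem_unravelCopies (ρ := .inr r) hab hz'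
      exact ⟨_, ⟨z, hz, rfl⟩, g.map_roleE hz'z⟩

end TreeUnravel

theorem stmt17_general {C R A : Type} (O : Set (ALCI C R × ALCI C R))
    (q : BELIQ C R) (D : Interp C R A) (t : Fin q.arity → A)
    (h : Certain (fun _ I => ModelsELIUOnt I (ELIuApprox O)) D
        (fun _ I v => q.Eval I v) t) :
    Certain (fun _ I => ModelsALCIOnt I O) (treeUnravel D (Set.range t))
      (fun _ I v => q.Eval I v) (fun i => Sum.inl (t i)) := by
  intro Δ _ I hI g
  have hModel : ModelsELIUOnt I.nonemptyPowerset (ELIuApprox O) :=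
    .nonemptyPowerset (fun _ hp => hp.2.1) hI.modelsELIUOnt_ELIuApprox
  refine q.eval_of_eval_nonemptyPowerset
    (h _ ⟨⟨Set.univ, Set.univ_nonempty⟩⟩ _ hModel (Hom.imageUnravelCopies g)) fun i => ?_
  exact ⟨.inl (t i), .inl ⟨⟨i, rfl⟩, rfl⟩, rfl⟩

/-- in `(ALCI, bELIQ)`, tree-database relaxing OMQ evaluation is
at least as complete as `ELI^u_⊥`-ontology relaxing OMQ evaluation: if `t` is
a certain answer to `(O≈, Σ, q)` on `D`, then `t` is a certain answer to `Q`
on the tree unraveling `D≈_t` (i.e. `t ∈ app_{F∧}(Q,D)`). -/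
theorem stmt17 {C R A : Type} (O : Set (ALCI C R × ALCI C R)) (hOfin : O.Finite)
    (SC : Set C) (SR : Set R) (q : BELIQ C R) (hq : q.wf)
    (D : Interp C R A) (hfin : D.FiniteFacts) (hsig : D.InSig SC SR)
    (t : Fin q.arity → A) (ht : ∀ i, t i ∈ D.adom)
    (h : Certain (fun _ I => ModelsELIUOnt I (ELIuApprox O)) D
        (fun _ I v => q.Eval I v) t) :
    Certain (fun _ I => ModelsALCIOnt I O) (treeUnravel D (Set.range t))
      (fun _ I v => q.Eval I v) (fun i => Sum.inl (t i)) :=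
  stmt17_general O q D t h
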